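/- arXiv:2412.20436 — 2 statements merged into one kernel-verified Lean document; each statement's English description precedes it below -/
import Mathlib

section
/- Let X be a measurable space, p and q probability measures on X, and F a countable family of measurable functions f : X → ℝ with sup_{f ∈ F} sup_{x ∈ X} |f(x)| ≤ ν < ∞. Let X_1, …, X_m be i.i.d. with law p and Y_1, …, Y_n be i.i.d. with law q, all mutually independent, and let p̂_m and q̂_n be the corresponding empirical measures. Then with probability at least 1 − δ, |IPM_F(p, q) − IPM_F(p̂_m, q̂_n)| ≤ 2 R_m^p(F) + 2 R_n^q(F) + √(18 ν² log(4/δ)) · (1/√m + 1/√n), where R_m^p(F) and R_n^q(F) are the Rademacher complexities of F with respect to p (with m samples) and q (with n samples). -/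
open MeasureTheory

/-- Integral probability metric for a family `F` of real-valued functions. -/
noncomputable def IPM {X : Type*} [MeasurableSpace X] (F : Set (X → ℝ))
    (p q : Measure X) : ℝ :=
  sSup ((fun f => |(∫ x, f x ∂p) - ∫ x, f x ∂q|) '' F)

/-- Empirical measure of the samples `x 0, …, x (m-1)`. -/
noncomputable def empMeasure {X : Type*} [MeasurableSpace X] {m : ℕ}
    (x : Fin m → X) : Measure X :=
  (m : ENNReal)⁻¹ • ∑ i : Fin m, Measure.dirac (x i)

/-- Rademacher complexity of `F` with respect to `μ` and `m` samples:
the Rademacher signs are encoded by i.i.d. uniform Booleans. -/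
noncomputable def rademacher {X : Type*} [MeasurableSpace X] (μ : Measure X)
    (m : ℕ) (F : Set (X → ℝ)) : ℝ :=
  ∫ ω : (Fin m → X) × (Fin m → Bool),
    sSup ((fun f =>
      |(m : ℝ)⁻¹ * ∑ i : Fin m, (if ω.2 i then (1 : ℝ) else -1) * f (ω.1 i)|) '' F)
    ∂((Measure.pi fun _ => μ).prod
        (Measure.pi fun _ => (PMF.uniformOfFintype Bool).toMeasure))

/-!
Write `Z_p(x) = IPM F p p̂_x` for the uniform deviation of a sample. The IPM is a pseudometric, so
`|IPM F p q - IPM F p̂ q̂| ≤ Z_p(x) + Z_q(y)`, and it suffices to control each deviation.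
Resampling one point moves `Z_p` by at most `2ν/m`, so by McDiarmid's inequality (proved by
induction on the number of coordinates, with Hoeffding's lemma at each step) `Z_p` exceeds its mean
by `√(8ν² log(4/δ) / m)` with probability at most `δ/4`. Its mean is at most `2 R_m^p(F)` by
symmetrization: introduce a ghost sample, and note that exchanging coordinates between the sample
and the ghost sample preserves their joint law while turning differences into Rademacher sums.
-/

open ProbabilityTheory
open scoped NNReal

section Averages

variable {m : ℕ} {ν : ℝ}

lemma abs_inv_mul_sum_le [NeZero m] {a : Fin m → ℝ} (ha : ∀ i, |a i| ≤ ν) :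
    |(m : ℝ)⁻¹ * ∑ i, a i| ≤ ν := by
  rw [abs_mul, abs_inv, Nat.abs_cast, inv_mul_le_iff₀ (by simp [Nat.pos_of_ne_zero (NeZero.ne m)])]
  calc |∑ i, a i| ≤ ∑ i, |a i| := Finset.abs_sum_le_sum_abs _ _
    _ ≤ ∑ _i : Fin m, ν := Finset.sum_le_sum fun i _ => ha i
    _ = m * ν := by simp

lemma abs_signed_inv_mul_sum_le [NeZero m] {a : Fin m → ℝ} (ha : ∀ i, |a i| ≤ ν)
    (ρ : Fin m → Bool) : |(m : ℝ)⁻¹ * ∑ i, (if ρ i then (1 : ℝ) else -1) * a i| ≤ ν :=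
  abs_inv_mul_sum_le fun i => by cases ρ i <;> simp [ha]

end Averages

section SupOfAbs

variable {α Ω : Type*} {F : Set α} {g : α → ℝ} {B : ℝ}

lemma bddAbove_image_abs (h : ∀ f ∈ F, |g f| ≤ B) : BddAbove ((fun f => |g f|) '' F) :=
  ⟨B, by rintro - ⟨f, hf, rfl⟩; exact h f hf⟩

lemma le_sSup_image_abs (h : ∀ f ∈ F, |g f| ≤ B) {f : α} (hf : f ∈ F) :
    |g f| ≤ sSup ((fun f => |g f|) '' F) :=
  le_csSup (bddAbove_image_abs h) ⟨f, hf, rfl⟩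

lemma sSup_image_abs_nonneg (F : Set α) (g : α → ℝ) : 0 ≤ sSup ((fun f => |g f|) '' F) :=
  Real.sSup_nonneg (by rintro - ⟨f, -, rfl⟩; exact abs_nonneg _)

lemma abs_sSup_image_abs_le (h : ∀ f ∈ F, |g f| ≤ B) :
    |sSup ((fun f => |g f|) '' F)| ≤ max B 0 := by
  rw [abs_of_nonneg (sSup_image_abs_nonneg F g)]
  exact Real.sSup_le (by rintro - ⟨f, hf, rfl⟩; exact (h f hf).trans (le_max_left _ _))
    (le_max_right _ _)

variable [MeasurableSpace Ω] {G : α → Ω → ℝ}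

lemma measurable_sSup_image_abs (hF : F.Countable) (hG : ∀ f ∈ F, Measurable (G f)) :
    Measurable fun ω => sSup ((fun f => |G f ω|) '' F) := by
  have := hF.to_subtype
  simp_rw [sSup_image']
  exact .iSup fun f => (hG f f.2).abs

lemma integrable_sSup_image_abs {μ : Measure Ω} [IsFiniteMeasure μ] (hF : F.Countable)
    (hG : ∀ f ∈ F, Measurable (G f)) (hB : ∀ f ∈ F, ∀ ω, |G f ω| ≤ B) :
    Integrable (fun ω => sSup ((fun f => |G f ω|) '' F)) μ :=
  .of_bound (measurable_sSup_image_abs hF hG).aestronglyMeasurable (max B 0)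
    (ae_of_all _ fun ω => abs_sSup_image_abs_le fun f hf => hB f hf ω)

end SupOfAbs

lemma Measurable.integrable_of_abs_le {X : Type*} [MeasurableSpace X] {μ : Measure X}
    [IsFiniteMeasure μ] {f : X → ℝ} (hf : Measurable f) {B : ℝ} (hB : ∀ x, |f x| ≤ B) :
    Integrable f μ :=
  .of_bound hf.aestronglyMeasurable B (ae_of_all _ hB)

section ProbabilityIntegral

variable {X : Type*} [MeasurableSpace X] {μ : Measure X} [IsProbabilityMeasure μ] {B : ℝ}

lemma abs_integral_le_of_abs_le {f : X → ℝ} (hf : ∀ x, |f x| ≤ B) : |∫ x, f x ∂μ| ≤ B := by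
  simpa using norm_integral_le_of_norm_le_const (μ := μ) (f := f) (ae_of_all _ hf)

lemma abs_integral_sub_integral_le_of_abs_sub_le {f g : X → ℝ} (hf : Integrable f μ)
    (hg : Integrable g μ) (h : ∀ x, |f x - g x| ≤ B) : |∫ x, f x ∂μ - ∫ x, g x ∂μ| ≤ B := by
  rw [← integral_sub hf hg]
  exact abs_integral_le_of_abs_le h

end ProbabilityIntegral

section IPM

variable {X : Type*} [MeasurableSpace X] {F : Set (X → ℝ)} {ν : ℝ} {p q p' q' : Measure X}

lemma IPM_nonneg : 0 ≤ IPM F p q := sSup_image_abs_nonneg _ _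

lemma IPM_comm : IPM F p q = IPM F q p := by
  simp_rw [IPM, abs_sub_comm]

lemma IPM_self : IPM F p p = 0 :=
  le_antisymm (Real.sSup_le (by rintro - ⟨f, -, rfl⟩; simp) le_rfl) IPM_nonneg

variable [IsProbabilityMeasure p] [IsProbabilityMeasure q]

lemma abs_integral_sub_integral_le {f : X → ℝ} (hf : ∀ x, |f x| ≤ ν) :
    |∫ x, f x ∂p - ∫ x, f x ∂q| ≤ 2 * ν :=
  (abs_sub _ _).trans (by linarith [abs_integral_le_of_abs_le (μ := p) hf,
    abs_integral_le_of_abs_le (μ := q) hf])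

lemma le_IPM (hν : ∀ f ∈ F, ∀ x, |f x| ≤ ν) {f : X → ℝ} (hf : f ∈ F) :
    |∫ x, f x ∂p - ∫ x, f x ∂q| ≤ IPM F p q :=
  le_sSup_image_abs (fun f hf => abs_integral_sub_integral_le (hν f hf)) hf

lemma IPM_le_of_nonpos (hν : ∀ f ∈ F, ∀ x, |f x| ≤ ν) (hν0 : ν ≤ 0) : IPM F p q ≤ 0 := by
  refine Real.sSup_le ?_ le_rfl
  rintro - ⟨f, hf, rfl⟩
  linarith [abs_integral_sub_integral_le (p := p) (q := q) (hν f hf)]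

lemma abs_IPM_le (hν : ∀ f ∈ F, ∀ x, |f x| ≤ ν) : |IPM F p q| ≤ max (2 * ν) 0 :=
  abs_sSup_image_abs_le fun f hf => abs_integral_sub_integral_le (hν f hf)

variable [IsProbabilityMeasure p'] [IsProbabilityMeasure q']

lemma IPM_le_IPM_add (hν : ∀ f ∈ F, ∀ x, |f x| ≤ ν) :
    IPM F p q ≤ IPM F p' q' + IPM F p p' + IPM F q q' := by
  have h₁ : 0 ≤ IPM F p' q' := IPM_nonneg
  have h₂ : 0 ≤ IPM F p p' := IPM_nonneg
  have h₃ : 0 ≤ IPM F q q' := IPM_nonneg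
  refine Real.sSup_le ?_ (by positivity)
  rintro - ⟨f, hf, rfl⟩
  have := abs_sub_le (∫ x, f x ∂p) (∫ x, f x ∂p') (∫ x, f x ∂q)
  have := abs_sub_le (∫ x, f x ∂p') (∫ x, f x ∂q') (∫ x, f x ∂q)
  have := abs_sub_comm (∫ x, f x ∂q') (∫ x, f x ∂q)
  have : |∫ x, f x ∂p - ∫ x, f x ∂p'| ≤ IPM F p p' := le_IPM hν hf
  have : |∫ x, f x ∂p' - ∫ x, f x ∂q'| ≤ IPM F p' q' := le_IPM hν hf
  have : |∫ x, f x ∂q - ∫ x, f x ∂q'| ≤ IPM F q q' := le_IPM hν hf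
  linarith

lemma abs_IPM_sub_IPM_le (hν : ∀ f ∈ F, ∀ x, |f x| ≤ ν) :
    |IPM F p q - IPM F p' q'| ≤ IPM F p p' + IPM F q q' := by
  have h₁ := IPM_le_IPM_add (p := p) (q := q) (p' := p') (q' := q') hν
  have h₂ := IPM_le_IPM_add (p := p') (q := q') (p' := p) (q' := q) hν
  rw [IPM_comm (p := p') (q := p), IPM_comm (p := q') (q := q)] at h₂
  exact abs_sub_le_iff.2 ⟨by linarith, by linarith⟩

end IPM

section EmpiricalMeasure

variable {X : Type*} [MeasurableSpace X] {m : ℕ}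

instance isProbabilityMeasure_empMeasure [NeZero m] (x : Fin m → X) :
    IsProbabilityMeasure (empMeasure x) :=
  ⟨by simp [empMeasure, ENNReal.inv_mul_cancel (NeZero.ne (m : ENNReal))]⟩

lemma integral_empMeasure (x : Fin m → X) {f : X → ℝ} (hf : Measurable f) :
    ∫ y, f y ∂empMeasure x = (m : ℝ)⁻¹ * ∑ i, f (x i) := by
  rw [empMeasure, integral_smul_measure, integral_finsetSum_measure fun i _ =>
    integrable_dirac' hf.stronglyMeasurable (by simp)]
  simp [integral_dirac' f _ hf.stronglyMeasurable]

lemma measurable_integral_empMeasure {f : X → ℝ} (hf : Measurable f) :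
    Measurable fun x : Fin m → X => ∫ y, f y ∂empMeasure x := by
  simp_rw [integral_empMeasure _ hf]
  fun_prop

lemma measurable_IPM_empMeasure {F : Set (X → ℝ)} (hF : F.Countable)
    (hFmeas : ∀ f ∈ F, Measurable f) (μ : Measure X) :
    Measurable fun x : Fin m → X => IPM F μ (empMeasure x) :=
  measurable_sSup_image_abs hF fun f hf =>
    (measurable_integral_empMeasure (hFmeas f hf)).const_sub _

lemma integral_integral_empMeasure [NeZero m] (μ : Measure X) [IsProbabilityMeasure μ]
    {f : X → ℝ} (hf : Measurable f) (hfμ : Integrable f μ) :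
    ∫ x, ∫ y, f y ∂empMeasure x ∂(Measure.pi fun _ : Fin m => μ) = ∫ y, f y ∂μ := by
  simp_rw [integral_empMeasure _ hf]
  rw [integral_const_mul, integral_finsetSum Finset.univ (f := fun i (x : Fin m → X) => f (x i))
    fun i _ => (measurePreserving_eval (fun _ => μ) i).integrable_comp_of_integrable hfμ]
  simp [fun i => integral_comp_eval (μ := fun _ : Fin m => μ) (i := i) hf.aestronglyMeasurable,
    NeZero.ne]

lemma IPM_empMeasure_update_le [NeZero m] {F : Set (X → ℝ)} (hFmeas : ∀ f ∈ F, Measurable f)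
    {ν : ℝ} (hν : ∀ f ∈ F, ∀ x, |f x| ≤ ν) (hν0 : 0 ≤ ν) (x : Fin m → X) (i : Fin m) (v : X) :
    IPM F (empMeasure (Function.update x i v)) (empMeasure x) ≤ 2 * ν / m := by
  refine Real.sSup_le ?_ (by positivity)
  rintro - ⟨f, hf, rfl⟩
  dsimp only
  have hsum : ∑ j, f (Function.update x i v j) = ∑ j, f (x j) + (f v - f (x i)) := by
    simp_rw [Function.apply_update (fun _ => f)]
    rw [Finset.sum_update_of_mem (Finset.mem_univ i),
      Finset.sum_eq_add_sum_sdiff_singleton_of_mem (Finset.mem_univ i)]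
    ring
  rw [integral_empMeasure _ (hFmeas f hf), integral_empMeasure _ (hFmeas f hf), hsum, ← mul_sub,
    add_sub_cancel_left, abs_mul, abs_inv, Nat.abs_cast, inv_mul_eq_div]
  gcongr
  linarith [abs_sub (f v) (f (x i)), hν f hf v, hν f hf (x i)]

end EmpiricalMeasure

section BoundedDifferences

variable {X Y : Type*} [MeasurableSpace X] [MeasurableSpace Y]

lemma hasSubgaussianMGF_sub_integral_of_abs_sub_le {μ : Measure X} [IsProbabilityMeasure μ]
    {f : X → ℝ} (hf : Measurable f) {c : ℝ≥0} (hc : ∀ x x', |f x - f x'| ≤ c) :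
    HasSubgaussianMGF (fun x => f x - ∫ x', f x' ∂μ) (c ^ 2) μ := by
  obtain ⟨x₀⟩ := nonempty_of_isProbabilityMeasure μ
  convert hasSubgaussianMGF_of_mem_Icc (μ := μ) (a := f x₀ - c) (b := f x₀ + c) hf.aemeasurable
    (ae_of_all _ fun x => by have := abs_le.1 (hc x x₀); constructor <;> linarith) using 1
  ext
  simp [Real.norm_of_nonneg (by positivity : (0 : ℝ) ≤ c + c)]

/-- One step of the martingale argument behind McDiarmid's inequality: integrate out the first
coordinate by Hoeffding's lemma, then use the sub-Gaussian bound on its conditional mean. -/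
lemma hasSubgaussianMGF_prod_sub_integral {μ : Measure X} {μ' : Measure Y}
    [IsProbabilityMeasure μ] [IsProbabilityMeasure μ'] {K : X × Y → ℝ} (hK : Measurable K)
    {B : ℝ} (hB : ∀ z, |K z| ≤ B) {c s : ℝ≥0} (hc : ∀ x x' y, |K (x, y) - K (x', y)| ≤ c)
    (hs : HasSubgaussianMGF (fun y => ∫ x, K (x, y) ∂μ - ∫ z, K z ∂μ.prod μ') s μ') :
    HasSubgaussianMGF (fun z => K z - ∫ z, K z ∂μ.prod μ') (c ^ 2 + s) (μ.prod μ') := by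
  set E := ∫ z, K z ∂μ.prod μ'
  have hbdd : ∀ z, K z - E ∈ Set.Icc (-B - |E|) (B + |E|) := fun z => by
    have := abs_le.1 (hB z); have := le_abs_self E; have := neg_abs_le E
    constructor <;> linarith
  have hint (t : ℝ) : Integrable (fun z => Real.exp (t * (K z - E))) (μ.prod μ') :=
    integrable_exp_mul_of_mem_Icc (hK.sub_const E).aemeasurable (ae_of_all _ hbdd)
  refine ⟨hint, fun t => ?_⟩
  have hinner (y : Y) : ∫ x, Real.exp (t * (K (x, y) - E)) ∂μ ≤
      Real.exp (c ^ 2 * t ^ 2 / 2) * Real.exp (t * (∫ x, K (x, y) ∂μ - E)) := by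
    have hy := hasSubgaussianMGF_sub_integral_of_abs_sub_le (μ := μ)
      (hK.comp measurable_prodMk_right) (fun x x' => hc x x' y)
    calc ∫ x, Real.exp (t * (K (x, y) - E)) ∂μ
        = mgf (fun x => K (x, y) - ∫ x', K (x', y) ∂μ) μ t *
            Real.exp (t * (∫ x, K (x, y) ∂μ - E)) := by
          rw [mgf, ← integral_mul_const]
          congr 1 with x
          rw [← Real.exp_add]
          ring_nf
      _ ≤ _ := by gcongr; exact_mod_cast hy.mgf_le t
  calc mgf (fun z => K z - E) (μ.prod μ') t
      = ∫ y, ∫ x, Real.exp (t * (K (x, y) - E)) ∂μ ∂μ' := integral_prod_symm _ (hint t)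
    _ ≤ ∫ y, Real.exp (c ^ 2 * t ^ 2 / 2) * Real.exp (t * (∫ x, K (x, y) ∂μ - E)) ∂μ' :=
        integral_mono (hint t).integral_prod_right ((hs.integrable_exp_mul t).const_mul _) hinner
    _ = Real.exp (c ^ 2 * t ^ 2 / 2) * mgf (fun y => ∫ x, K (x, y) ∂μ - E) μ' t :=
        integral_const_mul _ _
    _ ≤ Real.exp (c ^ 2 * t ^ 2 / 2) * Real.exp (s * t ^ 2 / 2) := by gcongr; exact hs.mgf_le t
    _ = Real.exp (↑(c ^ 2 + s) * t ^ 2 / 2) := by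
        rw [← Real.exp_add]; push_cast; ring_nf

/-- **McDiarmid's inequality**, in sub-Gaussian form. -/
theorem hasSubgaussianMGF_pi_sub_integral (μ : Measure X) [IsProbabilityMeasure μ] {c : ℝ≥0}
    {B : ℝ} : ∀ {m : ℕ} {H : (Fin m → X) → ℝ}, Measurable H → (∀ x, |H x| ≤ B) →
      (∀ x i v, |H (Function.update x i v) - H x| ≤ c) →
      HasSubgaussianMGF (fun x => H x - ∫ y, H y ∂(Measure.pi fun _ => μ)) (m * c ^ 2)
        (Measure.pi fun _ => μ)
  | 0, H, _, _, _ => by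
    have hH (x : Fin 0 → X) : H x - ∫ y, H y ∂(Measure.pi fun _ => μ) = 0 := by
      simp [Subsingleton.elim _ x]
    simp [hH, HasSubgaussianMGF.fun_zero]
  | m + 1, H, hH, hB, hc => by
    set e := MeasurableEquiv.piFinSuccAbove (fun _ : Fin (m + 1) => X) 0
    have he : MeasurePreserving e (Measure.pi fun _ => μ) (μ.prod (Measure.pi fun _ => μ)) :=
      measurePreserving_piFinSuccAbove (fun _ : Fin (m + 1) => μ) 0
    set K := H ∘ e.symm
    have hK : Measurable K := hH.comp e.symm.measurable
    have hKapply (x : X) (z : Fin m → X) : K (x, z) = H (Fin.cons x z) := by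
      simp [K, e, MeasurableEquiv.piFinSuccAbove_symm_apply, Fin.consEquiv]
    have hKint : Integrable K (μ.prod (Measure.pi fun _ => μ)) :=
      hK.integrable_of_abs_le fun _ => hB _
    have hmean : ∫ z, K z ∂μ.prod (Measure.pi fun _ => μ) = ∫ x, H x ∂(Measure.pi fun _ => μ) := by
      rw [← he.integral_comp' K]
      simp only [K, Function.comp_apply, MeasurableEquiv.symm_apply_apply]
    have hsection (z : Fin m → X) : Integrable (fun x => K (x, z)) μ :=
      (hK.comp measurable_prodMk_right).integrable_of_abs_le fun _ => hB _
    have hIH := hasSubgaussianMGF_pi_sub_integral μ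
      (hK.stronglyMeasurable.integral_prod_left' (μ := μ)).measurable
      (fun _ => abs_integral_le_of_abs_le fun _ => hB _)
      fun z i v => abs_integral_sub_integral_le_of_abs_sub_le (hsection _) (hsection _) fun x => by
        simpa only [hKapply, Fin.cons_update] using hc (Fin.cons x z) i.succ v
    rw [← integral_prod_symm K hKint] at hIH
    have hprod := hasSubgaussianMGF_prod_sub_integral hK (fun _ => hB _) (fun x x' z => by
      simpa only [hKapply, Fin.update_cons_zero] using hc (Fin.cons x' z) 0 x) hIH
    convert HasSubgaussianMGF.of_map he.measurable.aemeasurable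
      (X := fun z => K z - ∫ z, K z ∂μ.prod (Measure.pi fun _ => μ)) (by rwa [he.map_eq]) using 1
    · ext x
      rw [Function.comp_apply, hmean]
      simp only [K, Function.comp_apply, MeasurableEquiv.symm_apply_apply]
    · push_cast
      ring

end BoundedDifferences

section Symmetrization

variable {X : Type*} [MeasurableSpace X] {m : ℕ} {F : Set (X → ℝ)} {ν : ℝ}

noncomputable def rademacherSup (F : Set (X → ℝ)) (x : Fin m → X) (ρ : Fin m → Bool) : ℝ :=
  sSup ((fun f => |(m : ℝ)⁻¹ * ∑ i, (if ρ i then (1 : ℝ) else -1) * f (x i)|) '' F)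

def partialSwap (ρ : Fin m → Bool) (z : (Fin m → X) × (Fin m → X)) :
    (Fin m → X) × (Fin m → X) :=
  (fun i => if ρ i then z.1 i else z.2 i, fun i => if ρ i then z.2 i else z.1 i)

lemma measurePreserving_partialSwap (μ : Measure X) [SigmaFinite μ] (ρ : Fin m → Bool) :
    MeasurePreserving (partialSwap ρ) ((Measure.pi fun _ => μ).prod (Measure.pi fun _ => μ))
      ((Measure.pi fun _ => μ).prod (Measure.pi fun _ => μ)) := by
  have hΦ := measurePreserving_arrowProdEquivProdArrow X X (Fin m) (fun _ => μ) (fun _ => μ)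
  have hswap : MeasurePreserving (fun (ω : Fin m → X × X) i => if ρ i then ω i else (ω i).swap)
      (Measure.pi fun _ => μ.prod μ) (Measure.pi fun _ => μ.prod μ) := by
    refine measurePreserving_pi (fun _ => μ.prod μ) (fun _ => μ.prod μ)
      (f := fun i y => if ρ i then y else y.swap) fun i => ?_
    cases ρ i
    · exact Measure.measurePreserving_swap
    · exact .id _
  convert hΦ.comp (hswap.comp (hΦ.symm _)) using 1
  ext z i <;> cases h : ρ i <;> simp [partialSwap, h, MeasurableEquiv.arrowProdEquivProdArrow]

lemma integrable_rademacherSup [NeZero m] {Ω : Type*} [MeasurableSpace Ω] {P : Measure Ω}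
    [IsFiniteMeasure P] (hF : F.Countable) (hFmeas : ∀ f ∈ F, Measurable f)
    (hν : ∀ f ∈ F, ∀ x, |f x| ≤ ν) {φ : Ω → Fin m → X} {ψ : Ω → Fin m → Bool}
    (hφ : Measurable φ) (hψ : Measurable ψ) :
    Integrable (fun ω => rademacherSup F (φ ω) (ψ ω)) P := by
  refine integrable_sSup_image_abs hF (fun f hf => ?_)
    (fun f hf _ => abs_signed_inv_mul_sum_le (fun _ => hν f hf _) _)
  have hsign : Measurable fun b : Bool => if b then (1 : ℝ) else -1 := measurable_of_countable _
  exact measurable_const.mul (Finset.measurable_sum _ fun i _ =>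
    (hsign.comp ((measurable_pi_apply i).comp hψ)).mul
      ((hFmeas f hf).comp ((measurable_pi_apply i).comp hφ)))

lemma integrable_IPM_empMeasure {n : ℕ} [NeZero m] [NeZero n] {Ω : Type*} [MeasurableSpace Ω]
    {P : Measure Ω} [IsFiniteMeasure P] (hF : F.Countable) (hFmeas : ∀ f ∈ F, Measurable f)
    (hν : ∀ f ∈ F, ∀ x, |f x| ≤ ν) {φ : Ω → Fin m → X} {ψ : Ω → Fin n → X}
    (hφ : Measurable φ) (hψ : Measurable ψ) :
    Integrable (fun ω => IPM F (empMeasure (φ ω)) (empMeasure (ψ ω))) P :=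
  integrable_sSup_image_abs hF (fun f hf => ((measurable_integral_empMeasure (hFmeas f hf)).comp
    hφ).sub ((measurable_integral_empMeasure (hFmeas f hf)).comp hψ))
    (fun f hf _ => abs_integral_sub_integral_le (hν f hf))

lemma IPM_empMeasure_partialSwap_le [NeZero m] (hFmeas : ∀ f ∈ F, Measurable f)
    (hν : ∀ f ∈ F, ∀ x, |f x| ≤ ν) (ρ : Fin m → Bool) (z : (Fin m → X) × (Fin m → X)) :
    IPM F (empMeasure (partialSwap ρ z).1) (empMeasure (partialSwap ρ z).2) ≤
      rademacherSup F z.1 ρ + rademacherSup F z.2 ρ := by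
  refine Real.sSup_le ?_ (add_nonneg (sSup_image_abs_nonneg _ _) (sSup_image_abs_nonneg _ _))
  rintro - ⟨f, hf, rfl⟩
  have hsigned (x : Fin m → X) :
      |(m : ℝ)⁻¹ * ∑ i, (if ρ i then (1 : ℝ) else -1) * f (x i)| ≤ rademacherSup F x ρ :=
    le_sSup_image_abs (g := fun f => (m : ℝ)⁻¹ * ∑ i, (if ρ i then (1 : ℝ) else -1) * f (x i))
      (fun f hf => abs_signed_inv_mul_sum_le (fun _ => hν f hf _) ρ) hf
  have hdiff : ∫ y, f y ∂empMeasure (partialSwap ρ z).1 - ∫ y, f y ∂empMeasure (partialSwap ρ z).2 =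
      (m : ℝ)⁻¹ * ∑ i, (if ρ i then (1 : ℝ) else -1) * f (z.1 i) -
        (m : ℝ)⁻¹ * ∑ i, (if ρ i then (1 : ℝ) else -1) * f (z.2 i) := by
    simp only [integral_empMeasure _ (hFmeas f hf), ← mul_sub, ← Finset.sum_sub_distrib]
    congr 1
    refine Finset.sum_congr rfl fun i _ => ?_
    cases h : ρ i <;> simp [partialSwap, h]
  dsimp only
  rw [hdiff]
  exact (abs_sub _ _).trans (add_le_add (hsigned z.1) (hsigned z.2))

variable (μ : Measure X) [IsProbabilityMeasure μ]

lemma IPM_empMeasure_le_integral [NeZero m] (hF : F.Countable) (hFmeas : ∀ f ∈ F, Measurable f)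
    (hν : ∀ f ∈ F, ∀ x, |f x| ≤ ν) (x : Fin m → X) :
    IPM F μ (empMeasure x) ≤
      ∫ x', IPM F (empMeasure x') (empMeasure x) ∂(Measure.pi fun _ : Fin m => μ) := by
  refine Real.sSup_le ?_ (integral_nonneg fun _ => IPM_nonneg)
  rintro - ⟨f, hf, rfl⟩
  have hint : Integrable (fun x' => ∫ y, f y ∂empMeasure x') (Measure.pi fun _ : Fin m => μ) :=
    (measurable_integral_empMeasure (hFmeas f hf)).integrable_of_abs_le fun _ =>
      abs_integral_le_of_abs_le (hν f hf)
  calc |∫ y, f y ∂μ - ∫ y, f y ∂empMeasure x|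
      = |∫ x', (∫ y, f y ∂empMeasure x' - ∫ y, f y ∂empMeasure x) ∂(Measure.pi fun _ => μ)| := by
        rw [integral_sub hint (integrable_const _), integral_const, integral_integral_empMeasure μ
          (hFmeas f hf) ((hFmeas f hf).integrable_of_abs_le (hν f hf))]
        simp
    _ ≤ ∫ x', |∫ y, f y ∂empMeasure x' - ∫ y, f y ∂empMeasure x| ∂(Measure.pi fun _ => μ) :=
        abs_integral_le_integral_abs
    _ ≤ _ := integral_mono (hint.sub (integrable_const _)).abs
        (integrable_IPM_empMeasure hF hFmeas hν measurable_id measurable_const)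
        fun x' => le_IPM hν hf

/-- Flipping the signs `ρ` amounts to exchanging coordinates of the sample and the ghost sample,
which does not change the law of the pair. -/
lemma integral_IPM_empMeasure_pair_le [NeZero m] (hF : F.Countable)
    (hFmeas : ∀ f ∈ F, Measurable f) (hν : ∀ f ∈ F, ∀ x, |f x| ≤ ν) (ρ : Fin m → Bool) :
    ∫ z, IPM F (empMeasure z.1) (empMeasure z.2)
        ∂(Measure.pi fun _ : Fin m => μ).prod (Measure.pi fun _ : Fin m => μ) ≤
      2 * ∫ x, rademacherSup F x ρ ∂(Measure.pi fun _ => μ) := by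
  have hswap := measurePreserving_partialSwap μ ρ
  have hrad (φ : (Fin m → X) × (Fin m → X) → Fin m → X) (hφ : Measurable φ) :
      Integrable (fun z => rademacherSup F (φ z) ρ)
        ((Measure.pi fun _ => μ).prod (Measure.pi fun _ => μ)) :=
    integrable_rademacherSup hF hFmeas hν hφ measurable_const
  calc ∫ z, IPM F (empMeasure z.1) (empMeasure z.2)
        ∂(Measure.pi fun _ => μ).prod (Measure.pi fun _ => μ)
      = ∫ z, IPM F (empMeasure (partialSwap ρ z).1) (empMeasure (partialSwap ρ z).2)
          ∂(Measure.pi fun _ => μ).prod (Measure.pi fun _ => μ) := by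
        conv_lhs => rw [← hswap.map_eq]
        exact integral_map hswap.measurable.aemeasurable
          (integrable_IPM_empMeasure hF hFmeas hν measurable_fst measurable_snd).1
    _ ≤ ∫ z, (rademacherSup F z.1 ρ + rademacherSup F z.2 ρ)
          ∂(Measure.pi fun _ => μ).prod (Measure.pi fun _ => μ) :=
        integral_mono (integrable_IPM_empMeasure hF hFmeas hν
          (measurable_fst.comp hswap.measurable) (measurable_snd.comp hswap.measurable))
          ((hrad _ measurable_fst).add (hrad _ measurable_snd))
          (IPM_empMeasure_partialSwap_le hFmeas hν ρ)
    _ = 2 * ∫ x, rademacherSup F x ρ ∂(Measure.pi fun _ => μ) := by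
        rw [integral_add (hrad _ measurable_fst) (hrad _ measurable_snd),
          integral_fun_fst (fun x => rademacherSup F x ρ),
          integral_fun_snd (fun x => rademacherSup F x ρ)]
        simp only [probReal_univ, one_smul]
        ring

theorem integral_IPM_empMeasure_le_two_mul_rademacher [NeZero m] (hF : F.Countable)
    (hFmeas : ∀ f ∈ F, Measurable f) (hν : ∀ f ∈ F, ∀ x, |f x| ≤ ν) :
    ∫ x, IPM F μ (empMeasure x) ∂(Measure.pi fun _ : Fin m => μ) ≤ 2 * rademacher μ m F := by
  set P := Measure.pi fun _ : Fin m => μ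
  set U := Measure.pi fun _ : Fin m => (PMF.uniformOfFintype Bool).toMeasure
  have hpair : Integrable (fun z => IPM F (empMeasure z.1) (empMeasure z.2)) (P.prod P) :=
    integrable_IPM_empMeasure hF hFmeas hν measurable_fst measurable_snd
  have hrad : Integrable (fun ω => rademacherSup F ω.1 ω.2) (P.prod U) :=
    integrable_rademacherSup hF hFmeas hν measurable_fst measurable_snd
  calc ∫ x, IPM F μ (empMeasure x) ∂P
      ≤ ∫ x, ∫ x', IPM F (empMeasure x') (empMeasure x) ∂P ∂P :=
        integral_mono ((measurable_IPM_empMeasure hF hFmeas μ).integrable_of_abs_le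
          fun _ => abs_IPM_le hν) hpair.integral_prod_right
          (IPM_empMeasure_le_integral μ hF hFmeas hν)
    _ = ∫ z, IPM F (empMeasure z.1) (empMeasure z.2) ∂P.prod P := (integral_prod_symm _ hpair).symm
    _ = ∫ _ρ, ∫ z, IPM F (empMeasure z.1) (empMeasure z.2) ∂P.prod P ∂U := by simp
    _ ≤ ∫ ρ, 2 * ∫ x, rademacherSup F x ρ ∂P ∂U :=
        integral_mono (integrable_const _) (hrad.integral_prod_right.const_mul 2)
          (integral_IPM_empMeasure_pair_le μ hF hFmeas hν)
    _ = 2 * rademacher μ m F := by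
        rw [integral_const_mul, ← integral_prod_symm _ hrad]
        rfl

end Symmetrization

section Concentration

variable {X : Type*} [MeasurableSpace X] {m : ℕ} {F : Set (X → ℝ)} {ν : ℝ}
  (μ : Measure X) [IsProbabilityMeasure μ]

theorem measureReal_IPM_empMeasure_sub_integral_ge_le [NeZero m] (hF : F.Countable)
    (hFmeas : ∀ f ∈ F, Measurable f) (hν : ∀ f ∈ F, ∀ x, |f x| ≤ ν) (hν0 : 0 < ν) {t : ℝ}
    (ht : 0 ≤ t) :
    (Measure.pi fun _ : Fin m => μ).real {x | t ≤ IPM F μ (empMeasure x) -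
        ∫ x', IPM F μ (empMeasure x') ∂(Measure.pi fun _ : Fin m => μ)} ≤
      Real.exp (-(m * t ^ 2) / (8 * ν ^ 2)) := by
  have hc : 0 ≤ 2 * ν / m := by positivity
  have hdiff (x : Fin m → X) (i : Fin m) (v : X) :
      |IPM F μ (empMeasure (Function.update x i v)) - IPM F μ (empMeasure x)| ≤
        (2 * ν / m).toNNReal := by
    rw [Real.coe_toNNReal _ hc]
    calc _ ≤ IPM F μ μ + IPM F (empMeasure (Function.update x i v)) (empMeasure x) :=
          abs_IPM_sub_IPM_le hν
      _ ≤ 2 * ν / m := by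
          rw [IPM_self, zero_add]
          exact IPM_empMeasure_update_le hFmeas hν hν0.le x i v
  have hsg := hasSubgaussianMGF_pi_sub_integral μ (measurable_IPM_empMeasure hF hFmeas μ)
    (fun _ => abs_IPM_le hν) hdiff
  refine (hsg.measure_ge_le ht).trans_eq ?_
  rw [NNReal.coe_mul, NNReal.coe_pow, Real.coe_toNNReal _ hc, NNReal.coe_natCast]
  congr 1
  field_simp
  ring

theorem ofReal_one_sub_le_pi_IPM_empMeasure_le [NeZero m] (hF : F.Countable)
    (hFmeas : ∀ f ∈ F, Measurable f) (hν : ∀ f ∈ F, ∀ x, |f x| ≤ ν) {δ : ℝ} (hδ : 0 < δ)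
    (hδ1 : δ ≤ 1) :
    ENNReal.ofReal (1 - δ) ≤ (Measure.pi fun _ : Fin m => μ) {x | IPM F μ (empMeasure x) ≤
      ∫ x', IPM F μ (empMeasure x') ∂(Measure.pi fun _ : Fin m => μ) +
        √(8 * ν ^ 2 * Real.log (1 / δ) / m)} := by
  set P := Measure.pi fun _ : Fin m => μ
  set E := ∫ x', IPM F μ (empMeasure x') ∂P
  set t := √(8 * ν ^ 2 * Real.log (1 / δ) / m)
  rcases le_or_gt ν 0 with hν0 | hν0
  · have hgood : {x : Fin m → X | IPM F μ (empMeasure x) ≤ E + t} = Set.univ :=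
      Set.eq_univ_of_forall fun x => (IPM_le_of_nonpos hν hν0).trans
        (add_nonneg (integral_nonneg fun _ => IPM_nonneg) (Real.sqrt_nonneg _))
    rw [hgood, measure_univ]
    exact ENNReal.ofReal_le_one.2 (by linarith)
  have hlog : 0 ≤ Real.log (1 / δ) := Real.log_nonneg (by rw [le_div_iff₀ hδ]; linarith)
  set bad : Set (Fin m → X) := {x | t ≤ IPM F μ (empMeasure x) - E}
  have hbad : P.real bad ≤ δ := by
    refine (measureReal_IPM_empMeasure_sub_integral_ge_le μ hF hFmeas hν hν0
      (Real.sqrt_nonneg _)).trans_eq ?_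
    have hm : (m : ℝ) ≠ 0 := Nat.cast_ne_zero.2 (NeZero.ne m)
    rw [Real.sq_sqrt (by positivity), mul_div_cancel₀ _ hm, neg_div,
      mul_div_cancel_left₀ _ (by positivity), Real.exp_neg, Real.exp_log (by positivity),
      one_div, inv_inv]
  have hmeas : MeasurableSet bad :=
    measurableSet_le measurable_const ((measurable_IPM_empMeasure hF hFmeas μ).sub_const _)
  calc ENNReal.ofReal (1 - δ)
      ≤ ENNReal.ofReal (P.real badᶜ) := by
        rw [probReal_compl_eq_one_sub hmeas]
        exact ENNReal.ofReal_le_ofReal (by linarith)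
    _ ≤ P {x | IPM F μ (empMeasure x) ≤ E + t} := by
        rw [ofReal_measureReal]
        exact measure_mono fun x hx => by
          simp only [bad, Set.mem_compl_iff, Set.mem_ofPred_eq, not_le] at hx ⊢
          linarith

end Concentration

/-- Proposition 1: finite-sample deviation bound for the IPM. -/
theorem ipm_empirical_deviation
    {X : Type*} [MeasurableSpace X] (p q : Measure X)
    [IsProbabilityMeasure p] [IsProbabilityMeasure q]
    (F : Set (X → ℝ)) (hFcount : F.Countable)
    (hFmeas : ∀ f ∈ F, Measurable f)
    (ν : ℝ) (hν : ∀ f ∈ F, ∀ x, |f x| ≤ ν)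
    (m n : ℕ) (hm : 0 < m) (hn : 0 < n)
    (δ : ℝ) (hδ : 0 < δ) (hδ1 : δ < 1) :
    ENNReal.ofReal (1 - δ) ≤
      ((Measure.pi fun _ : Fin m => p).prod (Measure.pi fun _ : Fin n => q))
        {ω : (Fin m → X) × (Fin n → X) |
          |IPM F p q - IPM F (empMeasure ω.1) (empMeasure ω.2)| ≤
            2 * rademacher p m F + 2 * rademacher q n F +
              Real.sqrt (18 * ν ^ 2 * Real.log (4 / δ)) *
                (1 / Real.sqrt m + 1 / Real.sqrt n)} := by
  have : NeZero m := ⟨hm.ne'⟩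
  have : NeZero n := ⟨hn.ne'⟩
  have hdev (N : ℕ) : √(8 * ν ^ 2 * Real.log (1 / (δ / 4)) / N) ≤
      √(18 * ν ^ 2 * Real.log (4 / δ)) * (1 / √N) := by
    have hlog : 0 ≤ Real.log (4 / δ) := Real.log_nonneg (by rw [le_div_iff₀ hδ]; linarith)
    rw [one_div_div, Real.sqrt_div' _ (Nat.cast_nonneg N), ← div_eq_mul_one_div]
    gcongr
    nlinarith [sq_nonneg ν]
  calc ENNReal.ofReal (1 - δ)
      ≤ ENNReal.ofReal (1 - δ / 4) * ENNReal.ofReal (1 - δ / 4) := by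
        rw [← ENNReal.ofReal_mul (by linarith)]
        exact ENNReal.ofReal_le_ofReal (by nlinarith)
    _ ≤ _ * _ := mul_le_mul'
        (ofReal_one_sub_le_pi_IPM_empMeasure_le p hFcount hFmeas hν (by positivity) (by linarith))
        (ofReal_one_sub_le_pi_IPM_empMeasure_le q hFcount hFmeas hν (by positivity) (by linarith))
    _ = _ := (Measure.prod_prod _ _).symm
    _ ≤ _ := measure_mono fun ω ⟨hx, hy⟩ => ?_
  have hp := integral_IPM_empMeasure_le_two_mul_rademacher p hFcount hFmeas hν (m := m)
  have hq := integral_IPM_empMeasure_le_two_mul_rademacher q hFcount hFmeas hν (m := n)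
  calc |IPM F p q - IPM F (empMeasure ω.1) (empMeasure ω.2)|
      ≤ IPM F p (empMeasure ω.1) + IPM F q (empMeasure ω.2) := abs_IPM_sub_IPM_le hν
    _ ≤ _ := by
        have := hdev m; have := hdev n
        simp only [Set.mem_ofPred_eq] at hx hy
        rw [mul_add]
        linarith
end

section
/- Let (Z_c, d_c) and (Z_y, d_y) be separable metric spaces equipped with their Borel σ-algebras, and endow Z_c × Z_y with the metric d((a,b),(a',b')) = d_c(a,a') + d_y(b,b'). Let μ_c and ν_c be probability measures on Z_c and κ a probability measure on Z_y. Then sup over all bounded 1-Lipschitz f : Z_c × Z_y → ℝ of |∫ f d(μ_c ⊗ κ) − ∫ f d(ν_c ⊗ κ)| equals sup over all bounded 1-Lipschitz f_c : Z_c → ℝ of |∫ f_c dμ_c − ∫ f_c dν_c|. -/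
open MeasureTheory

private lemma integrable_of_bdd_meas {α : Type*} [MeasurableSpace α]
    {μ : Measure α} [IsFiniteMeasure μ] {f : α → ℝ} (hm : AEStronglyMeasurable f μ)
    {C : ℝ} (hC : ∀ x, |f x| ≤ C) : Integrable f μ :=
  (integrable_const C).mono' hm (Filter.Eventually.of_forall fun x => by
    simpa [Real.norm_eq_abs] using hC x)

/-- for product measures with a common second factor, the
1-Lipschitz IPM (with respect to the additive product metric
`d((a,b),(a',b')) = d_c(a,a') + d_y(b,b')`) between `μc ⊗ κ` and `νc ⊗ κ`
equals the 1-Lipschitz IPM between the first factors. -/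
theorem lipschitz_ipm_prod_eq
    {Zc Zy : Type*} [MetricSpace Zc] [MetricSpace Zy]
    [TopologicalSpace.SeparableSpace Zc] [TopologicalSpace.SeparableSpace Zy]
    [MeasurableSpace Zc] [BorelSpace Zc] [MeasurableSpace Zy] [BorelSpace Zy]
    (μc νc : Measure Zc) (κ : Measure Zy)
    [IsProbabilityMeasure μc] [IsProbabilityMeasure νc] [IsProbabilityMeasure κ] :
    sSup {r : ℝ | ∃ f : Zc × Zy → ℝ, (∃ C, ∀ p, |f p| ≤ C) ∧
        (∀ p q : Zc × Zy, |f p - f q| ≤ dist p.1 q.1 + dist p.2 q.2) ∧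
        r = |(∫ p, f p ∂(μc.prod κ)) - ∫ p, f p ∂(νc.prod κ)|} =
      sSup {r : ℝ | ∃ g : Zc → ℝ, (∃ C, ∀ a, |g a| ≤ C) ∧ LipschitzWith 1 g ∧
        r = |(∫ a, g a ∂μc) - ∫ a, g a ∂νc|} := by
  haveI : SecondCountableTopology Zc := UniformSpace.secondCountable_of_separable Zc
  haveI : SecondCountableTopology Zy := UniformSpace.secondCountable_of_separable Zy
  have hset : {r : ℝ | ∃ f : Zc × Zy → ℝ, (∃ C, ∀ p, |f p| ≤ C) ∧
        (∀ p q : Zc × Zy, |f p - f q| ≤ dist p.1 q.1 + dist p.2 q.2) ∧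
        r = |(∫ p, f p ∂(μc.prod κ)) - ∫ p, f p ∂(νc.prod κ)|} =
      {r : ℝ | ∃ g : Zc → ℝ, (∃ C, ∀ a, |g a| ≤ C) ∧ LipschitzWith 1 g ∧
        r = |(∫ a, g a ∂μc) - ∫ a, g a ∂νc|} := by
    ext r
    constructor
    · rintro ⟨f, ⟨C, hC⟩, hf, rfl⟩
      -- f is continuous (Lipschitz with constant 2 w.r.t. the product metric)
      have hfl : LipschitzWith 2 f := by
        apply LipschitzWith.of_dist_le_mul
        intro p q
        rw [Real.dist_eq]
        calc |f p - f q| ≤ dist p.1 q.1 + dist p.2 q.2 := hf p q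
          _ ≤ dist p q + dist p q := by
              rw [Prod.dist_eq]
              gcongr <;> simp [le_max_left, le_max_right]
          _ = 2 * dist p q := by ring
      have hcont : Continuous f := hfl.continuous
      set g : Zc → ℝ := fun a => ∫ y, f (a, y) ∂κ with hg_def
      have hslice : ∀ a : Zc, Integrable (fun y => f (a, y)) κ := fun a =>
        integrable_of_bdd_meas
          ((hcont.comp (Continuous.prodMk_right a)).aestronglyMeasurable)
          (fun y => hC (a, y))
      have hgC : ∀ a, |g a| ≤ C := by
        intro a
        have := norm_integral_le_of_norm_le_const (μ := κ) (f := fun y => f (a, y))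
          (C := C) (Filter.Eventually.of_forall fun y => by
            simpa [Real.norm_eq_abs] using hC (a, y))
        simpa [Real.norm_eq_abs, measure_univ] using this
      have hgl : LipschitzWith 1 g := by
        apply LipschitzWith.of_dist_le_mul
        intro a b
        rw [Real.dist_eq, NNReal.coe_one, one_mul]
        have : g a - g b = ∫ y, (f (a, y) - f (b, y)) ∂κ :=
          (integral_sub (hslice a) (hslice b)).symm
        rw [this]
        calc |∫ y, (f (a, y) - f (b, y)) ∂κ| ≤ ∫ y, |f (a, y) - f (b, y)| ∂κ := by
              simpa [Real.norm_eq_abs] using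
                norm_integral_le_integral_norm (fun y => f (a, y) - f (b, y)) (μ := κ)
          _ ≤ ∫ _y, dist a b ∂κ := by
              apply integral_mono_of_nonneg
                (Filter.Eventually.of_forall fun y => abs_nonneg _)
                (integrable_const _)
              exact Filter.Eventually.of_forall fun y => by
                simpa using hf (a, y) (b, y)
          _ = dist a b := by simp [measure_univ]
      have hint : ∀ (μ : Measure Zc) [IsProbabilityMeasure μ],
          Integrable f (μ.prod κ) := fun μ _ =>
        integrable_of_bdd_meas hcont.aestronglyMeasurable hC
      have hfub : ∀ (μ : Measure Zc) [IsProbabilityMeasure μ],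
          (∫ p, f p ∂(μ.prod κ)) = ∫ a, g a ∂μ := by
        intro μ _
        rw [integral_prod f (hint μ)]
      refine ⟨g, ⟨C, hgC⟩, hgl, ?_⟩
      rw [hfub μc, hfub νc]
    · rintro ⟨g, ⟨C, hC⟩, hg, rfl⟩
      refine ⟨fun p => g p.1, ⟨C, fun p => hC p.1⟩, ?_, ?_⟩
      · intro p q
        have := hg.dist_le_mul p.1 q.1
        rw [Real.dist_eq, NNReal.coe_one, one_mul] at this
        exact this.trans (le_add_of_nonneg_right dist_nonneg)
      · have hint : ∀ (μ : Measure Zc) [IsProbabilityMeasure μ],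
            (∫ p : Zc × Zy, g p.1 ∂(μ.prod κ)) = ∫ a, g a ∂μ := by
          intro μ _
          have : Integrable (fun p : Zc × Zy => g p.1) (μ.prod κ) :=
            integrable_of_bdd_meas
              ((hg.continuous.comp continuous_fst).aestronglyMeasurable)
              (fun p => hC p.1)
          rw [integral_prod _ this]
          simp [measure_univ]
        rw [hint μc, hint νc]
  rw [hset]
end
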